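/- Let R be a Noetherian ring of prime characteristic p and c ∈ R. For e ≥ 1, if the map θ_{e,c} : R → {}^e R sending 1 to {}^e c is pure, then θ_{e+1,c} : R → {}^{e+1} R sending 1 to {}^{e+1} c is also pure. -/

import Mathlib

/-!
STATEMENT 15.  `R` Noetherian of prime characteristic `p`, `c ∈ R`, `e ≥ 1`.
If `θ_{e,c} : R → ᵉR`, `1 ↦ ᵉc`, is pure, then `θ_{e+1,c} : R → ᵉ⁺¹R`,
`1 ↦ ᵉ⁺¹c`, is pure.
-/

open scoped TensorProduct

universe u

/-- `FrobTwist R p e` is `R` viewed as an `R`-module via the `e`-th iterate of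
the Frobenius endomorphism (the paper's `ᵉR`). -/
def FrobTwist (R : Type u) (p e : ℕ) : Type u := R

instance (R : Type u) [CommRing R] (p e : ℕ) : CommRing (FrobTwist R p e) :=
  inferInstanceAs (CommRing R)

noncomputable instance (R : Type u) [CommRing R] (p e : ℕ) [Fact p.Prime] [CharP R p] :
    Module R (FrobTwist R p e) :=
  Module.compHom R (iterateFrobenius R p e)

/-- The `R`-linear map `θ_{e,c} : R → ᵉR` with `1 ↦ ᵉc`. -/
noncomputable def thetaMap (R : Type u) [CommRing R] (p e : ℕ) [Fact p.Prime] [CharP R p]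
    (c : R) : R →ₗ[R] FrobTwist R p e where
  toFun r := (iterateFrobenius R p e r * c : R)
  map_add' a b := by
    show iterateFrobenius R p e (a + b) * c = iterateFrobenius R p e a * c + iterateFrobenius R p e b * c
    rw [map_add, add_mul]
  map_smul' r x := by
    show iterateFrobenius R p e (r * x) * c = iterateFrobenius R p e r * (iterateFrobenius R p e x * c)
    rw [map_mul, mul_assoc]

/-- A map of `R`-modules is pure if it stays injective after tensoring with
every `R`-module. -/
def IsPureMap {R : Type u} [CommRing R] {M N : Type u}
    [AddCommGroup M] [AddCommGroup N] [Module R M] [Module R N]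
    (f : M →ₗ[R] N) : Prop :=
  ∀ (V : Type u) [AddCommGroup V] [Module R V],
    Function.Injective (LinearMap.lTensor V f)

/-- The purity exponent `𝔢_c ∈ ℕ ∪ {∞}`: the least `e` such that `θ_{e',c}` is
pure for all `e' ≥ e` (and `∞` if there is no such `e`). -/
noncomputable def purityExponent (R : Type u) [CommRing R] (p : ℕ)
    [Fact p.Prime] [CharP R p] (c : R) : ℕ∞ :=
  sInf {n : ℕ∞ | ∃ e : ℕ, n = (e : ℕ∞) ∧
    ∀ e' : ℕ, e ≤ e' → IsPureMap (thetaMap R p e' c)}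


/-! `θ_{e+1,c}` is `θ_{1,1} : R → ¹R` followed by `¹R → ᵉ⁺¹R`, `x ↦ Fᵉ(x) c`, the base change of
`θ_{e,c}` along Frobenius. As `e ≥ 1`, `θ_{e,c}` factors through `θ_{1,1}` in the same way, so
`θ_{1,1}` is pure. The base change is pure too: for `W = V ⊗ ¹R`, an `R`-module through `¹R`, the
map `V ⊗ ¹R → V ⊗ ᵉ⁺¹R` is `W ⊗ θ_{e,c}` followed by the map `W ⊗ ᵉR → V ⊗ ᵉ⁺¹R`,
`(v ⊗ x) ⊗ y ↦ v ⊗ Fᵉ(x) y`, which has the left inverse `v ⊗ z ↦ (v ⊗ 1) ⊗ z`. -/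

noncomputable section

section IsPureMap

variable {R : Type u} [CommRing R] {M N P : Type u} [AddCommGroup M] [AddCommGroup N]
  [AddCommGroup P] [Module R M] [Module R N] [Module R P] {f : M →ₗ[R] N} {g : N →ₗ[R] P}

theorem IsPureMap.comp (hg : IsPureMap g) (hf : IsPureMap f) : IsPureMap (g ∘ₗ f) :=
  fun V _ _ => by
    rw [LinearMap.lTensor_comp, LinearMap.coe_comp]
    exact (hg V).comp (hf V)

theorem IsPureMap.of_comp (h : IsPureMap (g ∘ₗ f)) : IsPureMap f :=
  fun V _ _ => by
    have := h V
    rw [LinearMap.lTensor_comp, LinearMap.coe_comp] at this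
    exact this.of_comp

end IsPureMap

namespace FrobTwist

variable {R : Type u} {p e : ℕ}

def val (x : FrobTwist R p e) : R := x

variable [CommRing R]

def mk : R →+* FrobTwist R p e := RingHom.id R

@[simp] theorem val_mk (x : R) : (mk x : FrobTwist R p e).val = x := rfl

@[simp] theorem val_add (x y : FrobTwist R p e) : (x + y).val = x.val + y.val := rfl

@[simp] theorem val_one : (1 : FrobTwist R p e).val = 1 := rfl

variable [Fact p.Prime] [CharP R p]

@[simp] theorem val_smul (r : R) (x : FrobTwist R p e) :
    (r • x).val = iterateFrobenius R p e r * x.val := rfl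

theorem smul_eq_mk (r : R) (x : FrobTwist R p e) : r • x = mk (iterateFrobenius R p e r * x.val) :=
  rfl

instance : Algebra R (FrobTwist R p e) :=
  Algebra.ofModule (fun r x y => mul_assoc (iterateFrobenius R p e r) x y)
    (fun r x y => mul_left_comm x (iterateFrobenius R p e r) y)

variable (R p) in
/-- `θ_{k,y}` base-changed along `Fᵃ`: the map `ᵃR → ᵏ⁺ᵃR`, `x ↦ F^k(x) y`. -/
def frobeniusMul (a k : ℕ) (y : R) : FrobTwist R p a →ₗ[R] FrobTwist R p (k + a) where
  toFun x := mk (iterateFrobenius R p k x.val * y)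
  map_add' x x' := by rw [val_add, map_add, add_mul]; rfl
  map_smul' r x := by
    rw [val_smul, map_mul (iterateFrobenius R p k), ← iterateFrobenius_add_apply, mul_assoc]; rfl

@[simp] theorem val_frobeniusMul (a k : ℕ) (y : R) (x : FrobTwist R p a) :
    (frobeniusMul R p a k y x).val = iterateFrobenius R p k x.val * y := rfl

theorem frobeniusMul_add (a k : ℕ) (y y' : R) :
    frobeniusMul R p a k (y + y') = frobeniusMul R p a k y + frobeniusMul R p a k y' :=
  LinearMap.ext fun _ => mul_add _ y y'

theorem frobeniusMul_comp_mulLeft (a k : ℕ) (r y : R) :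
    frobeniusMul R p a k y ∘ₗ LinearMap.mulLeft R (mk r)
      = frobeniusMul R p a k (iterateFrobenius R p k r * y) :=
  LinearMap.ext fun x => by
    change mk (iterateFrobenius R p k (r * x.val) * y)
      = mk (iterateFrobenius R p k x.val * (iterateFrobenius R p k r * y))
    rw [map_mul (iterateFrobenius R p k), mul_left_comm, mul_assoc]

end FrobTwist

theorem thetaMap_add_eq_frobeniusMul_comp (R : Type u) [CommRing R] (p : ℕ) [Fact p.Prime]
    [CharP R p] (a k : ℕ) (c : R) :
    thetaMap R p (k + a) c = FrobTwist.frobeniusMul R p a k c ∘ₗ thetaMap R p a 1 :=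
  LinearMap.ext fun r => by
    change FrobTwist.mk (iterateFrobenius R p (k + a) r * c)
      = FrobTwist.mk (iterateFrobenius R p k (iterateFrobenius R p a r * 1) * c)
    rw [mul_one, iterateFrobenius_add_apply]

theorem val_thetaMap_one (R : Type u) [CommRing R] (p : ℕ) [Fact p.Prime] [CharP R p] (e : ℕ)
    (c : R) : (thetaMap R p e c 1).val = c := by
  change iterateFrobenius R p e 1 * c = c
  rw [map_one, one_mul]

variable {R : Type u} [CommRing R] {p : ℕ} [Fact p.Prime] [CharP R p]

variable (R p) in
/-- `V ⊗ ᵃR` as an `R`-module through multiplication on the factor `ᵃR` (not through `V`): the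
base change of `V` along `Fᵃ`. -/
def FrobBaseChange (a : ℕ) (V : Type u) [AddCommGroup V] [Module R V] : Type u :=
  V ⊗[R] FrobTwist R p a

namespace FrobBaseChange

variable {a : ℕ} {V : Type u} [AddCommGroup V] [Module R V]

instance : AddCommGroup (FrobBaseChange R p a V) :=
  inferInstanceAs (AddCommGroup (V ⊗[R] FrobTwist R p a))

instance : Module R (FrobBaseChange R p a V) :=
  Module.compHom (V ⊗[R] FrobTwist R p a)
    ((Module.End.lTensorAlgHom R (FrobTwist R p a) V).toRingHom.comp
      ((Algebra.lmul R (FrobTwist R p a)).toRingHom.comp FrobTwist.mk))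

variable (R p a V) in
def toTensor : FrobBaseChange R p a V ≃+ V ⊗[R] FrobTwist R p a := AddEquiv.refl _

variable (R p a) in
def tmul (v : V) (x : FrobTwist R p a) : FrobBaseChange R p a V :=
  (toTensor R p a V).symm (v ⊗ₜ x)

@[simp] theorem toTensor_tmul (v : V) (x : FrobTwist R p a) :
    toTensor R p a V (tmul R p a v x) = v ⊗ₜ x := rfl

theorem toTensor_smul (r : R) (w : FrobBaseChange R p a V) :
    toTensor R p a V (r • w)
      = LinearMap.lTensor V (LinearMap.mulLeft R (FrobTwist.mk r)) (toTensor R p a V w) := rfl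

theorem add_tmul (v v' : V) (x : FrobTwist R p a) :
    tmul R p a (v + v') x = tmul R p a v x + tmul R p a v' x := by
  rw [tmul, TensorProduct.add_tmul, map_add, tmul, tmul]

theorem tmul_eq_smul (v : V) (x : FrobTwist R p a) : tmul R p a v x = x.val • tmul R p a v 1 :=
  congrArg (tmul R p a v) (mul_one x).symm

theorem smul_tmul_one (r : R) (v : V) :
    tmul R p a (r • v) 1 = iterateFrobenius R p a r • tmul R p a v 1 := by
  rw [tmul, TensorProduct.smul_tmul, ← tmul, tmul_eq_smul, FrobTwist.val_smul, FrobTwist.val_one,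
    mul_one]

variable {k : ℕ}

variable (R p a V k) in
/-- `(v ⊗ x) ⊗ y ↦ v ⊗ F^k(x) y`. -/
def collapse : FrobBaseChange R p a V ⊗[R] FrobTwist R p k →+ V ⊗[R] FrobTwist R p (k + a) :=
  TensorProduct.liftAddHom
    (AddMonoidHom.mk'
      (fun w => AddMonoidHom.mk'
        (fun y => LinearMap.lTensor V (FrobTwist.frobeniusMul R p a k y.val) (toTensor R p a V w))
        fun y y' => by
          rw [FrobTwist.val_add, FrobTwist.frobeniusMul_add, LinearMap.lTensor_add]; rfl)
      fun w w' => AddMonoidHom.ext fun y => by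
        simp only [AddMonoidHom.mk'_apply, AddMonoidHom.add_apply, map_add])
    fun r w y => by
      simp only [AddMonoidHom.mk'_apply]
      rw [toTensor_smul, ← LinearMap.lTensor_comp_apply, FrobTwist.frobeniusMul_comp_mulLeft]
      rfl

theorem collapse_tmul (w : FrobBaseChange R p a V) (y : FrobTwist R p k) :
    collapse R p a V k (w ⊗ₜ y)
      = LinearMap.lTensor V (FrobTwist.frobeniusMul R p a k y.val) (toTensor R p a V w) :=
  rfl

variable (R p a V k) in
def expand : V ⊗[R] FrobTwist R p (k + a) →+ FrobBaseChange R p a V ⊗[R] FrobTwist R p k :=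
  TensorProduct.liftAddHom
    (AddMonoidHom.mk'
      (fun v => AddMonoidHom.mk' (fun z => tmul R p a v 1 ⊗ₜ FrobTwist.mk z.val)
        fun z z' => by simp only [FrobTwist.val_add, map_add, TensorProduct.tmul_add])
      fun v v' => AddMonoidHom.ext fun z => by
        simp only [AddMonoidHom.add_apply, AddMonoidHom.mk'_apply, add_tmul,
          TensorProduct.add_tmul])
    fun r v z => by
      simp only [AddMonoidHom.mk'_apply]
      rw [smul_tmul_one, TensorProduct.smul_tmul, FrobTwist.smul_eq_mk, FrobTwist.val_smul,
        FrobTwist.val_mk, ← iterateFrobenius_add_apply]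

theorem expand_tmul (v : V) (z : FrobTwist R p (k + a)) :
    expand R p a V k (v ⊗ₜ z) = tmul R p a v 1 ⊗ₜ FrobTwist.mk z.val := rfl

theorem expand_collapse (t : FrobBaseChange R p a V ⊗[R] FrobTwist R p k) :
    expand R p a V k (collapse R p a V k t) = t := by
  induction t using TensorProduct.induction_on with
  | zero => rw [map_zero, map_zero]
  | add t t' ht ht' => rw [map_add, map_add, ht, ht']
  | tmul w y =>
    obtain ⟨s, rfl⟩ := (toTensor R p a V).symm.surjective w
    induction s using TensorProduct.induction_on with
    | zero => rw [map_zero, TensorProduct.zero_tmul, map_zero, map_zero]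
    | add s s' hs hs' => rw [map_add, TensorProduct.add_tmul, map_add, map_add, hs, hs']
    | tmul v x =>
      rw [← tmul, collapse_tmul, toTensor_tmul, LinearMap.lTensor_tmul, expand_tmul,
        tmul_eq_smul v x, TensorProduct.smul_tmul, FrobTwist.smul_eq_mk, FrobTwist.val_frobeniusMul]

theorem collapse_injective : Function.Injective (collapse R p a V k) :=
  Function.LeftInverse.injective expand_collapse

theorem collapse_lTensor_thetaMap (c : R) (w : FrobBaseChange R p a V) :
    collapse R p a V k (LinearMap.lTensor _ (thetaMap R p k c) (w ⊗ₜ 1))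
      = LinearMap.lTensor V (FrobTwist.frobeniusMul R p a k c) (toTensor R p a V w) := by
  rw [LinearMap.lTensor_tmul, collapse_tmul, val_thetaMap_one]

end FrobBaseChange

theorem IsPureMap.frobeniusMul {k : ℕ} {c : R} (h : IsPureMap (thetaMap R p k c)) (a : ℕ) :
    IsPureMap (FrobTwist.frobeniusMul R p a k c) := by
  intro V _ _
  let W := FrobBaseChange R p a V
  have factor : ⇑(LinearMap.lTensor V (FrobTwist.frobeniusMul R p a k c))
      = FrobBaseChange.collapse R p a V k ∘ LinearMap.lTensor W (thetaMap R p k c) ∘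
          (TensorProduct.rid R W).symm ∘ (FrobBaseChange.toTensor R p a V).symm := by
    funext s
    rw [Function.comp_apply, Function.comp_apply, Function.comp_apply,
      TensorProduct.rid_symm_apply, FrobBaseChange.collapse_lTensor_thetaMap,
      AddEquiv.apply_symm_apply]
  rw [factor]
  exact FrobBaseChange.collapse_injective.comp <| (h W).comp <|
    (TensorProduct.rid R W).symm.injective.comp (FrobBaseChange.toTensor R p a V).symm.injective

end

theorem theta_succ_pure_of_theta_pure_general
    (R : Type u) [CommRing R]
    (p : ℕ) [Fact p.Prime] [CharP R p] (c : R) (e : ℕ) (he : 1 ≤ e)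
    (hpure : IsPureMap (thetaMap R p e c)) :
    IsPureMap (thetaMap R p (e + 1) c) := by
  obtain ⟨d, rfl⟩ := Nat.exists_eq_add_of_le' he
  have hFpure : IsPureMap (thetaMap R p 1 1) := by
    rw [thetaMap_add_eq_frobeniusMul_comp] at hpure
    exact hpure.of_comp
  rw [thetaMap_add_eq_frobeniusMul_comp]
  exact (hpure.frobeniusMul 1).comp hFpure

theorem theta_succ_pure_of_theta_pure
    (R : Type u) [CommRing R] [IsNoetherianRing R]
    (p : ℕ) [Fact p.Prime] [CharP R p] (c : R) (e : ℕ) (he : 1 ≤ e)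
    (hpure : IsPureMap (thetaMap R p e c)) :
    IsPureMap (thetaMap R p (e + 1) c) :=
  theta_succ_pure_of_theta_pure_general R p c e he hpure
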